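/- arXiv:2204.01049 — 3 statements merged into one kernel-verified Lean document; each statement's English description precedes it below -/
import Mathlib

section
/- Suppose the training error functions L_X(W) = (1/n)∑_{i=1}^n ℓ(W, x_i) and L_{X'}(W) = (1/(n-1))∑_{i≠j} ℓ(W, x_i) are built from a loss ℓ(·, x) that is convex and ρ-Lipschitz in W for every x, and let the regularized objectives F(W) = L_X(W) + (λ/2)‖W‖² and F'(W) = L_{X'}(W) + (λ/2)‖W‖² have minimizers W_X and W_{X'} respectively, where X' is X with the j-th sample removed. Then ‖W_{X'} - W_X‖ ≤ 2ρ/(λn), and moreover ℓ(W_{X'}, x_j) - ℓ(W_X, x_j) ≤ 2ρ²/(λn). -/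
/-!
Both objectives are `λ`-strongly convex, so each grows quadratically away from its minimizer:
with `Δ = ‖W_{X'} - W_X‖`, `F W_{X'} ≥ F W_X + λ/2 Δ²` and `F' W_X ≥ F' W_{X'} + λ/2 Δ²`.
Adding the two, `λ Δ²` is at most the increment of `F - F'` from `W_X` to `W_{X'}`. Since
`F - F' = (1/n) (ℓ(·, x_j) - mean of the other losses)` is `2ρ/n`-Lipschitz, `λ Δ ≤ 2ρ/n`;
the loss bound then follows from the Lipschitz continuity of `ℓ(·, x_j)`.
-/

open Finset Set Filter Topology

lemma convexOn_finset_sum {𝕜 E β ι : Type*} [Semiring 𝕜] [PartialOrder 𝕜] [AddCommMonoid E]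
    [AddCommMonoid β] [PartialOrder β] [IsOrderedAddMonoid β] [SMul 𝕜 E] [Module 𝕜 β]
    {s : Set E} (hs : Convex 𝕜 s) {t : Finset ι} {f : ι → E → β}
    (hf : ∀ i ∈ t, ConvexOn 𝕜 s (f i)) : ConvexOn 𝕜 s (∑ i ∈ t, f i) :=
  Finset.sum_induction f (ConvexOn 𝕜 s) (fun _ _ => ConvexOn.add) (convexOn_const 0 hs) hf

lemma abs_sum_sub_sum_le_card_mul {ι : Type*} (t : Finset ι) {a b : ι → ℝ} {c : ℝ}
    (h : ∀ i ∈ t, |a i - b i| ≤ c) : |∑ i ∈ t, a i - ∑ i ∈ t, b i| ≤ #t * c := by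
  rw [← sum_sub_distrib, ← nsmul_eq_mul]
  exact (abs_sum_le_sum_abs _ _).trans (sum_le_card_nsmul _ _ _ h)

lemma mean_sub_mean_erase_sub_le {n : ℕ} (hn : 2 ≤ n) (j : Fin n) {a b : Fin n → ℝ} {c : ℝ}
    (h : ∀ i, |a i - b i| ≤ c) :
    (1 / n * ∑ i, a i - 1 / (n - 1) * ∑ i ∈ univ.erase j, a i)
      - (1 / n * ∑ i, b i - 1 / (n - 1) * ∑ i ∈ univ.erase j, b i) ≤ 2 * c / n := by
  have hn1 : (0 : ℝ) < n - 1 := by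
    have : (2 : ℝ) ≤ n := by exact_mod_cast hn
    linarith
  have hcard : ((univ.erase j).card : ℝ) = n - 1 := by
    rw [card_erase_of_mem (mem_univ j), card_univ, Fintype.card_fin,
      Nat.cast_sub (by omega : 1 ≤ n), Nat.cast_one]
  have hrest : -((∑ i ∈ univ.erase j, a i - ∑ i ∈ univ.erase j, b i) / (n - 1)) ≤ c := by
    have := abs_sum_sub_sum_le_card_mul (univ.erase j) (a := a) (b := b) fun i _ => h i
    rw [hcard] at this
    rw [neg_le, le_div_iff₀ hn1]
    linarith [(abs_le.1 this).1]
  have hj : a j - b j ≤ c := (abs_le.1 (h j)).2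
  rw [← add_sum_erase _ a (mem_univ j), ← add_sum_erase _ b (mem_univ j)]
  calc _ = (a j - b j - (∑ i ∈ univ.erase j, a i - ∑ i ∈ univ.erase j, b i) / (n - 1)) / n := by
        field_simp
        ring
    _ ≤ (c + c) / n := by
        gcongr
        linarith
    _ = 2 * c / n := by ring

section StrongConvexity

variable {E : Type*} [NormedAddCommGroup E] [InnerProductSpace ℝ E]

lemma strongConvexOn_mul_sum_add_sq_norm {ι : Type*} (t : Finset ι) {f : ι → E → ℝ}
    (hf : ∀ i ∈ t, ConvexOn ℝ univ (f i)) {c : ℝ} (hc : 0 ≤ c) (m : ℝ) :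
    StrongConvexOn univ m fun W => c * ∑ i ∈ t, f i W + m / 2 * ‖W‖ ^ 2 := by
  rw [strongConvexOn_iff_convex]
  simpa [Finset.sum_apply] using (convexOn_finset_sum convex_univ hf).smul hc

lemma StrongConvexOn.add_sq_norm_sub_le_of_isMinOn {s : Set E} {m : ℝ} {f : E → ℝ}
    (hf : StrongConvexOn s m f) {x₀ w : E} (hx₀ : IsMinOn f s x₀) (hx₀s : x₀ ∈ s) (hw : w ∈ s) :
    f x₀ + m / 2 * ‖w - x₀‖ ^ 2 ≤ f w := by
  set C := m / 2 * ‖w - x₀‖ ^ 2 with hC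
  -- Minimality at `x₀` against the point `t • w + (1 - t) • x₀` of the segment, then `t → 0`.
  have hsegment : ∀ t ∈ Ioo (0 : ℝ) 1, f x₀ + (1 - t) * C ≤ f w := by
    rintro t ⟨ht0, ht1⟩
    have hseg := hf.2 hw hx₀s ht0.le (sub_nonneg.2 ht1.le) (add_sub_cancel t 1)
    have hmin : f x₀ ≤ f _ := hx₀ (hf.1 hw hx₀s ht0.le (sub_nonneg.2 ht1.le) (add_sub_cancel t 1))
    simp only [smul_eq_mul, ← hC] at hseg
    refine le_of_mul_le_mul_left ?_ ht0
    linarith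
  have hlim : Tendsto (fun t : ℝ => f x₀ + (1 - t) * C) (𝓝[>] 0) (𝓝 (f x₀ + (1 - 0) * C)) :=
    ((continuous_const.add ((continuous_const.sub continuous_id).mul continuous_const)).tendsto
      0).mono_left nhdsWithin_le_nhds
  simpa using le_of_tendsto hlim (eventually_of_mem (Ioo_mem_nhdsGT one_pos) hsegment)

lemma StrongConvexOn.norm_sub_le_of_isMinOn {s : Set E} {m K : ℝ} {f g : E → ℝ}
    (hm : 0 < m) (hK : 0 ≤ K) (hf : StrongConvexOn s m f) (hg : StrongConvexOn s m g)
    {x y : E} (hx : IsMinOn f s x) (hy : IsMinOn g s y) (hxs : x ∈ s) (hys : y ∈ s)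
    (hfg : (f y - g y) - (f x - g x) ≤ K * ‖y - x‖) : ‖y - x‖ ≤ K / m := by
  have hfx := hf.add_sq_norm_sub_le_of_isMinOn hx hxs hys
  have hgy := hg.add_sq_norm_sub_le_of_isMinOn hy hys hxs
  rw [norm_sub_rev] at hgy
  rw [le_div_iff₀ hm]
  nlinarith [norm_nonneg (y - x)]

end StrongConvexity

theorem remove_one_sensitivity_and_stability
    (d n : ℕ) (hn : 2 ≤ n) (lam ρ : ℝ) (hlam : 0 < lam) (hρ : 0 ≤ ρ)
    {X : Type*} (x : Fin n → X) (j : Fin n)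
    (ℓ : EuclideanSpace ℝ (Fin d) → X → ℝ)
    (hconv : ∀ s : X, ConvexOn ℝ Set.univ (fun W => ℓ W s))
    (hlip : ∀ s : X, ∀ u v, |ℓ u s - ℓ v s| ≤ ρ * ‖u - v‖)
    (F F' : EuclideanSpace ℝ (Fin d) → ℝ)
    (hF : ∀ W, F W = ((1 : ℝ) / n) * ∑ i, ℓ W (x i) + lam / 2 * ‖W‖ ^ 2)
    (hF' : ∀ W, F' W =
      ((1 : ℝ) / (n - 1)) * ∑ i ∈ Finset.univ.erase j, ℓ W (x i) + lam / 2 * ‖W‖ ^ 2)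
    (WX WX' : EuclideanSpace ℝ (Fin d))
    (hWX : ∀ w, F WX ≤ F w) (hWX' : ∀ w, F' WX' ≤ F' w) :
    ‖WX' - WX‖ ≤ 2 * ρ / (lam * n) ∧
      ℓ WX' (x j) - ℓ WX (x j) ≤ 2 * ρ ^ 2 / (lam * n) := by
  have hcoef : (0 : ℝ) ≤ 1 / (n - 1) := one_div_nonneg.2 <| by
    have : (2 : ℝ) ≤ n := by exact_mod_cast hn
    linarith
  have hSC : StrongConvexOn univ lam F := by
    rw [funext hF]
    exact strongConvexOn_mul_sum_add_sq_norm _ (fun i _ => hconv (x i)) (by positivity) lam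
  have hSC' : StrongConvexOn univ lam F' := by
    rw [funext hF']
    exact strongConvexOn_mul_sum_add_sq_norm _ (fun i _ => hconv (x i)) hcoef lam
  have hgap : (F WX' - F' WX') - (F WX - F' WX) ≤ 2 * ρ / n * ‖WX' - WX‖ := by
    simp only [hF, hF', add_sub_add_right_eq_sub]
    convert mean_sub_mean_erase_sub_le hn j fun i => hlip (x i) WX' WX using 1
    ring
  have hstab : ‖WX' - WX‖ ≤ 2 * ρ / (lam * n) := by
    convert hSC.norm_sub_le_of_isMinOn hlam (by positivity) hSC' (isMinOn_univ_iff.2 hWX)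
      (isMinOn_univ_iff.2 hWX') (mem_univ _) (mem_univ _) hgap using 1
    ring
  refine ⟨hstab, ?_⟩
  calc ℓ WX' (x j) - ℓ WX (x j) ≤ ρ * ‖WX' - WX‖ := (abs_le.1 (hlip (x j) WX' WX)).2
    _ ≤ ρ * (2 * ρ / (lam * n)) := by gcongr
    _ = 2 * ρ ^ 2 / (lam * n) := by ring
end

section
/- Let z, z' ∈ ℝ^C with |z_j - z'_j| ≤ Δ for all j, and let p_v = exp(z_v)/∑_{j=1}^C exp(z_j) and p'_v = exp(z'_v)/∑_{j=1}^C exp(z'_j) be the softmax probabilities of coordinate v. Then |p'_v - p_v| ≤ min(exp(2Δ) - 1, 1). -/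
/-!
Perturbing every logit by at most `Δ` multiplies the numerator `exp z_v` by at most `e^Δ` and the
partition function `∑ exp z_j` by at least `e^{-Δ}`, so `p'_v ≤ e^{2Δ} p_v`, and symmetrically
`p_v ≤ e^{2Δ} p'_v`. Hence `p'_v - p_v ≤ (e^{2Δ} - 1) p_v ≤ e^{2Δ} - 1` in both directions, while
the bound `1` holds because both are probabilities.
-/

open Real Finset

lemma abs_sub_le_min_of_le_mul {p q K : ℝ} (hK : 1 ≤ K) (hp₀ : 0 ≤ p) (hp₁ : p ≤ 1)
    (hq₀ : 0 ≤ q) (hq₁ : q ≤ 1) (hpq : p ≤ K * q) (hqp : q ≤ K * p) :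
    |p - q| ≤ min (K - 1) 1 := by
  rw [le_min_iff, abs_le, abs_le]
  refine ⟨⟨?_, ?_⟩, ⟨?_, ?_⟩⟩ <;> nlinarith

noncomputable def softmax {ι : Type*} [Fintype ι] (z : ι → ℝ) (v : ι) : ℝ :=
  exp (z v) / ∑ j, exp (z j)

section Softmax

variable {ι : Type*} [Fintype ι]

lemma sum_exp_pos (z : ι → ℝ) (v : ι) : 0 < ∑ j, exp (z j) :=
  sum_pos (fun j _ ↦ exp_pos (z j)) ⟨v, mem_univ v⟩

lemma softmax_nonneg (z : ι → ℝ) (v : ι) : 0 ≤ softmax z v :=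
  div_nonneg (exp_pos _).le (sum_exp_pos z v).le

lemma softmax_le_one (z : ι → ℝ) (v : ι) : softmax z v ≤ 1 :=
  (div_le_one (sum_exp_pos z v)).2 <|
    single_le_sum (fun j _ ↦ (exp_pos (z j)).le) (mem_univ v)

lemma softmax_le_exp_two_mul_softmax {z z' : ι → ℝ} {Δ : ℝ} (hz : ∀ j, |z j - z' j| ≤ Δ)
    (v : ι) : softmax z' v ≤ exp (2 * Δ) * softmax z v := by
  have hnum : exp (z' v) ≤ exp Δ * exp (z v) := by
    rw [← exp_add]
    exact exp_le_exp.2 (by linarith [(abs_le.1 (hz v)).1])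
  have hden : exp (-Δ) * ∑ j, exp (z j) ≤ ∑ j, exp (z' j) := by
    rw [mul_sum]
    refine sum_le_sum fun j _ ↦ ?_
    rw [← exp_add]
    exact exp_le_exp.2 (by linarith [(abs_le.1 (hz j)).2])
  have hS := sum_exp_pos z v
  calc softmax z' v ≤ exp Δ * exp (z v) / (exp (-Δ) * ∑ j, exp (z j)) :=
        div_le_div₀ (by positivity) hnum (by positivity) hden
    _ = exp (2 * Δ) * softmax z v := by
        rw [softmax, exp_neg, two_mul, exp_add]
        field_simp

end Softmax

theorem softmax_sensitivity_general
    (C : ℕ) (Δ : ℝ)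
    (z z' : Fin C → ℝ) (hz : ∀ j, |z j - z' j| ≤ Δ) (v : Fin C) :
    |Real.exp (z' v) / (∑ j, Real.exp (z' j)) -
      Real.exp (z v) / (∑ j, Real.exp (z j))| ≤
        min (Real.exp (2 * Δ) - 1) 1 := by
  have hΔ : 0 ≤ Δ := (abs_nonneg _).trans (hz v)
  have hz' : ∀ j, |z' j - z j| ≤ Δ := fun j ↦ abs_sub_comm (z j) (z' j) ▸ hz j
  exact abs_sub_le_min_of_le_mul (one_le_exp (by positivity))
    (softmax_nonneg z' v) (softmax_le_one z' v) (softmax_nonneg z v) (softmax_le_one z v)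
    (softmax_le_exp_two_mul_softmax hz v) (softmax_le_exp_two_mul_softmax hz' v)

theorem softmax_sensitivity
    (C : ℕ) (hC : 1 ≤ C) (Δ : ℝ) (hΔ : 0 ≤ Δ)
    (z z' : Fin C → ℝ) (hz : ∀ j, |z j - z' j| ≤ Δ) (v : Fin C) :
    |Real.exp (z' v) / (∑ j, Real.exp (z' j)) -
      Real.exp (z v) / (∑ j, Real.exp (z j))| ≤
        min (Real.exp (2 * Δ) - 1) 1 :=
  softmax_sensitivity_general C Δ z z' hz v
end

section
/- The exponential mechanism satisfies ε-DP: if q(X, r) is a score function with |q(X, r) - q(X', r)| ≤ Δq for all neighbouring X, X' and all candidates r in a finite set R, then the mechanism that outputs r with probability exp(ε·q(X,r)/(2Δq)) / ∑_{r'∈R} exp(ε·q(X,r')/(2Δq)) satisfies: for all neighbouring X, X' and all r, Pr[output r on X] ≤ exp(ε)·Pr[output r on X']. -/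
/-!
Rescaling the score by `ε / (2Δq)` makes the exponents for neighbouring datasets differ by at most
`ε / 2` at every candidate. Hence the numerator of the output probability changes by a factor of at
most `exp (ε / 2)`, and so does the normalising sum; together this gives the factor `exp ε`.
-/

open Finset Real

lemma div_le_mul_mul_div {a b A B k : ℝ} (hb : 0 ≤ b) (hk : 0 ≤ k) (hA : 0 < A) (hB : 0 < B)
    (hab : a ≤ k * b) (hBA : B ≤ k * A) : a / A ≤ k * k * (b / B) := by
  rw [div_le_iff₀ hA]
  calc a ≤ k * (b / B * B) := by rwa [div_mul_cancel₀ b hB.ne']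
    _ ≤ k * (b / B * (k * A)) := by gcongr
    _ = k * k * (b / B) * A := by ring

lemma exp_le_exp_mul_exp_of_sub_le {x y c : ℝ} (h : x - y ≤ c) : exp x ≤ exp c * exp y := by
  rw [← exp_add]
  exact exp_le_exp.mpr (by linarith)

lemma exp_div_sum_exp_le {ι : Type*} {s : Finset ι} {f g : ι → ℝ} {c : ℝ}
    (hfg : ∀ i ∈ s, |f i - g i| ≤ c) {r : ι} (hr : r ∈ s) :
    exp (f r) / ∑ i ∈ s, exp (f i) ≤ exp (2 * c) * (exp (g r) / ∑ i ∈ s, exp (g i)) := by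
  have hsum_pos : ∀ h : ι → ℝ, 0 < ∑ i ∈ s, exp (h i) := fun h =>
    sum_pos (fun i _ => exp_pos (h i)) ⟨r, hr⟩
  have hnum : exp (f r) ≤ exp c * exp (g r) :=
    exp_le_exp_mul_exp_of_sub_le (abs_sub_le_iff.mp (hfg r hr)).1
  have hsum : ∑ i ∈ s, exp (g i) ≤ exp c * ∑ i ∈ s, exp (f i) := by
    rw [mul_sum]
    exact sum_le_sum fun i hi =>
      exp_le_exp_mul_exp_of_sub_le (abs_sub_le_iff.mp (hfg i hi)).2
  rw [two_mul, exp_add]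
  exact div_le_mul_mul_div (exp_pos _).le (exp_pos _).le (hsum_pos f) (hsum_pos g) hnum hsum

theorem exponential_mechanism_dp_general
    {D R : Type*} [Fintype R]
    (Neighbor : D → D → Prop) (ε Δq : ℝ) (hε : 0 < ε) (hΔq : 0 < Δq)
    (q : D → R → ℝ)
    (hsens : ∀ X X', Neighbor X X' → ∀ r, |q X r - q X' r| ≤ Δq) :
    ∀ X X', Neighbor X X' → ∀ r : R,
      Real.exp (ε * q X r / (2 * Δq)) / (∑ r' : R, Real.exp (ε * q X r' / (2 * Δq))) ≤
        Real.exp ε *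
          (Real.exp (ε * q X' r / (2 * Δq)) /
            (∑ r' : R, Real.exp (ε * q X' r' / (2 * Δq)))) := by
  intro X X' hN r
  have hscaled : ∀ s ∈ (univ : Finset R),
      |ε * q X s / (2 * Δq) - ε * q X' s / (2 * Δq)| ≤ ε / 2 := by
    intro s _
    have hcoef : 0 ≤ ε / (2 * Δq) := by positivity
    calc |ε * q X s / (2 * Δq) - ε * q X' s / (2 * Δq)|
        = ε / (2 * Δq) * |q X s - q X' s| := by
          rw [← abs_of_nonneg hcoef, ← abs_mul]; ring_nf
      _ ≤ ε / (2 * Δq) * Δq := by gcongr; exact hsens X X' hN s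
      _ = ε / 2 := by field_simp
  simpa only [mul_div_cancel₀ ε two_ne_zero] using exp_div_sum_exp_le hscaled (mem_univ r)

theorem exponential_mechanism_dp
    {D R : Type*} [Fintype R] [Nonempty R]
    (Neighbor : D → D → Prop) (ε Δq : ℝ) (hε : 0 < ε) (hΔq : 0 < Δq)
    (q : D → R → ℝ)
    (hsens : ∀ X X', Neighbor X X' → ∀ r, |q X r - q X' r| ≤ Δq) :
    ∀ X X', Neighbor X X' → ∀ r : R,
      Real.exp (ε * q X r / (2 * Δq)) / (∑ r' : R, Real.exp (ε * q X r' / (2 * Δq))) ≤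
        Real.exp ε *
          (Real.exp (ε * q X' r / (2 * Δq)) /
            (∑ r' : R, Real.exp (ε * q X' r' / (2 * Δq)))) :=
  exponential_mechanism_dp_general Neighbor ε Δq hε hΔq q hsens
end
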